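/- Let C ⊆ [0,1] be a compact, nowhere dense set with positive Lebesgue measure (a 'fat Cantor set'), and define f : ℝ → ℝ by f(x) = 1/2 for x ∈ C and f(x) = 1 otherwise. For a Borel set X ⊆ ℝ let T_X denote the bounded operator on L²(ℝ) of multiplication by χ_X·f, i.e. (T_X ψ)(x) = χ_X(x) f(x) ψ(x) almost everywhere. Then ‖T_U‖ = 1 for every nonempty open set U ⊆ ℝ (in particular the open set U ∖ C has positive Lebesgue measure), whereas ‖T_C‖ = 1/2. Hence the positive operator measure X ↦ T_X has norm one on all nonempty open sets but fails the norm-1-property on Borel sets. -/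
import Mathlib


open MeasureTheory

lemma mul_op_norm_le
    {T : Lp ℂ 2 (volume : Measure ℝ) →L[ℂ] Lp ℂ 2 (volume : Measure ℝ)}
    {g : ℝ → ℂ} {c : ℝ} (hc : 0 ≤ c) (hg : ∀ x, ‖g x‖ ≤ c)
    (hTg : ∀ ψ : Lp ℂ 2 (volume : Measure ℝ),
      ∀ᵐ x ∂(volume : Measure ℝ), (T ψ) x = g x * ψ x) :
    ‖T‖ ≤ c := by
  refine T.opNorm_le_bound hc fun ψ => ?_
  have h1 : eLpNorm (⇑(T ψ)) 2 volume = eLpNorm (fun x => g x * ψ x) 2 volume :=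
    eLpNorm_congr_ae (hTg ψ)
  have h2 : eLpNorm (fun x => g x * ψ x) 2 volume
      ≤ eLpNorm (⇑((c : ℂ) • ψ)) 2 volume := by
    rw [eLpNorm_congr_ae (Lp.coeFn_smul (c : ℂ) ψ)]
    refine eLpNorm_mono fun x => ?_
    simp only [Pi.smul_apply, smul_eq_mul, norm_mul, Complex.norm_real,
      Real.norm_eq_abs, abs_of_nonneg hc]
    exact mul_le_mul_of_nonneg_right (hg x) (norm_nonneg _)
  have h3 : ‖T ψ‖ ≤ ‖(c : ℂ) • ψ‖ := by
    rw [Lp.norm_def, Lp.norm_def]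
    exact ENNReal.toReal_mono (Lp.eLpNorm_ne_top _) (h1 ▸ h2)
  calc ‖T ψ‖ ≤ ‖(c : ℂ) • ψ‖ := h3
    _ = c * ‖ψ‖ := by
        rw [norm_smul, Complex.norm_real, Real.norm_eq_abs, abs_of_nonneg hc]

lemma mul_op_norm_ge
    {T : Lp ℂ 2 (volume : Measure ℝ) →L[ℂ] Lp ℂ 2 (volume : Measure ℝ)}
    {g : ℝ → ℂ}
    (hTg : ∀ ψ : Lp ℂ 2 (volume : Measure ℝ),
      ∀ᵐ x ∂(volume : Measure ℝ), (T ψ) x = g x * ψ x)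
    {S : Set ℝ} (hS : MeasurableSet S) (hpos : volume S ≠ 0)
    (hfin : volume S ≠ ⊤) {m : ℝ} (hm : 0 ≤ m)
    (hgm : ∀ x ∈ S, g x = (m : ℂ)) : m ≤ ‖T‖ := by
  set ψ : Lp ℂ 2 (volume : Measure ℝ) := indicatorConstLp 2 hS hfin (1 : ℂ) with hψdef
  have hψ : ⇑ψ =ᵐ[volume] S.indicator fun _ => (1 : ℂ) := indicatorConstLp_coeFn
  have heq : T ψ = (m : ℂ) • ψ := by
    apply Lp.ext
    filter_upwards [hTg ψ, hψ, Lp.coeFn_smul (m : ℂ) ψ] with x h1 h2 h3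
    rw [h1, h3, Pi.smul_apply, h2, smul_eq_mul]
    by_cases hx : x ∈ S
    · rw [hgm x hx]
    · rw [Set.indicator_of_notMem hx, mul_zero, mul_zero]
  have hψnorm : 0 < ‖ψ‖ := by
    rw [hψdef, norm_indicatorConstLp (by norm_num) (by norm_num)]
    have h0 : 0 < (volume S).toReal := ENNReal.toReal_pos hpos hfin
    simp only [norm_one, one_mul]
    positivity
  have hle := T.le_opNorm ψ
  rw [heq, norm_smul, Complex.norm_real, Real.norm_eq_abs, abs_of_nonneg hm] at hle
  exact le_of_mul_le_mul_right hle hψnorm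

/-- the positive operator measure of multiplication by `χ_X·f`,
where `f = 1/2` on a fat Cantor set `C` and `f = 1` elsewhere, has norm one on
every nonempty open set, yet `‖T C‖ = 1/2`, so it fails the norm-1-property. -/
theorem fat_cantor_multiplication_pom_norm
    (C : Set ℝ) (hCcompact : IsCompact C) (hCnd : IsNowhereDense C)
    (hCsub : C ⊆ Set.Icc 0 1) (hCvol : 0 < volume C)
    (f : ℝ → ℝ)
    (hf : ∀ x : ℝ, (x ∈ C → f x = 1 / 2) ∧ (x ∉ C → f x = 1))
    (T : Set ℝ → (Lp ℂ 2 (volume : Measure ℝ) →L[ℂ] Lp ℂ 2 (volume : Measure ℝ)))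
    (hT : ∀ X : Set ℝ, MeasurableSet X → ∀ ψ : Lp ℂ 2 (volume : Measure ℝ),
      ∀ᵐ x ∂(volume : Measure ℝ),
        (T X ψ) x = X.indicator (fun y => ((f y : ℝ) : ℂ)) x * ψ x) :
    (∀ U : Set ℝ, IsOpen U → U.Nonempty → 0 < volume (U \ C)) ∧
    (∀ U : Set ℝ, IsOpen U → U.Nonempty → ‖T U‖ = 1) ∧
    ‖T C‖ = 1 / 2 := by
  have hCclosed : IsClosed C := hCcompact.isClosed
  have hfbound : ∀ x : ℝ, ‖((f x : ℝ) : ℂ)‖ ≤ 1 := by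
    intro x
    rw [Complex.norm_real, Real.norm_eq_abs]
    by_cases hx : x ∈ C
    · rw [(hf x).1 hx]; norm_num [abs_le]
    · rw [(hf x).2 hx]; norm_num
  have hdiff : ∀ U : Set ℝ, IsOpen U → U.Nonempty → (U \ C).Nonempty := by
    intro U hU hUne
    rw [Set.diff_nonempty]  -- goal: ¬ U ⊆ C
    intro hsub
    have : U ⊆ interior (closure C) := by
      rw [← hU.interior_eq]
      exact interior_mono (hsub.trans subset_closure)
    rw [hCnd] at this
    exact hUne.not_subset_empty this
  have part1 : ∀ U : Set ℝ, IsOpen U → U.Nonempty → 0 < volume (U \ C) := by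
    intro U hU hUne
    exact (hU.sdiff hCclosed).measure_pos volume (hdiff U hU hUne)
  refine ⟨part1, ?_, ?_⟩
  · intro U hU hUne
    have hUm : MeasurableSet U := hU.measurableSet
    have hle : ‖T U‖ ≤ 1 := by
      refine mul_op_norm_le zero_le_one (fun x => ?_) (hT U hUm)
      by_cases hx : x ∈ U
      · rw [Set.indicator_of_mem hx]; exact hfbound x
      · rw [Set.indicator_of_notMem hx]; simp
    have hge : (1 : ℝ) ≤ ‖T U‖ := by
      obtain ⟨x, hx⟩ := hdiff U hU hUne
      obtain ⟨r, hr, hball⟩ := Metric.isOpen_iff.mp (hU.sdiff hCclosed) x hx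
      refine mul_op_norm_ge (hT U hUm) (S := Metric.ball x r) measurableSet_ball
        ((Metric.isOpen_ball.measure_pos volume (Metric.nonempty_ball.mpr hr)).ne')
        measure_ball_lt_top.ne zero_le_one (fun y hy => ?_)
      have hyUC := hball hy
      rw [Set.indicator_of_mem hyUC.1, (hf y).2 hyUC.2]
    linarith
  · have hCm : MeasurableSet C := hCclosed.measurableSet
    have hCfin : volume C ≠ ⊤ := by
      refine ne_top_of_le_ne_top ?_ (measure_mono hCsub)
      rw [Real.volume_Icc]
      norm_num
    have hle : ‖T C‖ ≤ 1 / 2 := by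
      refine mul_op_norm_le (by norm_num) (fun x => ?_) (hT C hCm)
      by_cases hx : x ∈ C
      · rw [Set.indicator_of_mem hx, Complex.norm_real, Real.norm_eq_abs,
          (hf x).1 hx]
        norm_num [abs_le]
      · rw [Set.indicator_of_notMem hx]; simp
    have hge : (1 : ℝ) / 2 ≤ ‖T C‖ := by
      refine mul_op_norm_ge (hT C hCm) hCm hCvol.ne' hCfin (by norm_num)
        (fun x hx => ?_)
      rw [Set.indicator_of_mem hx, (hf x).1 hx]
    linarith
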